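/- arXiv:1509.01762 — 2 statements merged into one kernel-verified Lean document; each statement's English description precedes it below -/
import Mathlib

section
/- Let 0 < m < k be real numbers, and define H_r(t) = ∫_t^∞ h_r(τ) dτ with h_r(s) = e^{-s} for s ≥ 0 and h_r(s) = (1-s)^{r-1} for s ≤ 0. Then there exists a constant C (depending only on m, k) such that H_m(s+t) ≤ C · H_k(s) · (1+t)^{m-k} for all s ∈ ℝ and all t ≥ 0. -/
open MeasureTheory

/-- The kernel `h_r`. -/
noncomputable def hker (r : ℝ) (s : ℝ) : ℝ :=
  if 0 ≤ s then Real.exp (-s) else (1 - s) ^ (r - 1)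

/-- The tail integral `H_r`. -/
noncomputable def Hker (r : ℝ) (t : ℝ) : ℝ := ∫ τ in Set.Ioi t, hker r τ

/-!
Explicitly, `H_r(s) = e^{-s}` for `s ≥ 0` and `H_r(s) = ((1 - s)^r - 1)/r + 1` for `s ≤ 0`, so `H_r`
is comparable, with constants depending only on `r`, to the profile `e^{-s}` / `(1 - s)^r`.
For the profiles the estimate is elementary: when `s + t ≥ 0` the polynomial factor
`(1 + t)^{k-m} ≤ (1 + s⁻)^{k-m} (1 + s + t)^{k-m}` is absorbed by `e^{-(s+t)}` and `(1 + s⁻)^k`,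
and when `s + t < 0` we have `(1 - s - t)^m (1 + t)^{k-m} ≤ (1 - s)^k`.
-/

open Real Set Nat

lemma hker_of_nonneg (r : ℝ) {s : ℝ} (hs : 0 ≤ s) : hker r s = exp (-s) := if_pos hs

lemma hker_of_nonpos (r : ℝ) {s : ℝ} (hs : s ≤ 0) : hker r s = (1 - s) ^ (r - 1) := by
  rcases hs.lt_or_eq with hs | rfl
  · exact if_neg hs.not_ge
  · simp [hker]

lemma continuous_hker (r : ℝ) : Continuous (hker r) := by
  refine continuous_if_le continuous_const continuous_id (by fun_prop) ?_ ?_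
  · refine ContinuousOn.rpow_const (by fun_prop) fun s hs => Or.inl ?_
    simp only [mem_ofPred_eq] at hs
    linarith
  · rintro s rfl
    simp

lemma Hker_of_nonneg (r : ℝ) {t : ℝ} (ht : 0 ≤ t) : Hker r t = exp (-t) := by
  rw [Hker, setIntegral_congr_fun measurableSet_Ioi
    fun τ hτ => hker_of_nonneg r (ht.trans (le_of_lt hτ)), integral_exp_neg_Ioi]

lemma Hker_of_nonpos {r : ℝ} (hr : 0 < r) {t : ℝ} (ht : t ≤ 0) :
    Hker r t = ((1 - t) ^ r - 1) / r + 1 := by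
  have hint : IntegrableOn (hker r) (Ioi 0) :=
    (integrableOn_exp_neg_Ioi 0).congr_fun
      (fun τ hτ => (hker_of_nonneg r (le_of_lt hτ)).symm) measurableSet_Ioi
  have hleft : ∫ τ in t..0, hker r τ = ((1 - t) ^ r - 1) / r := by
    rw [intervalIntegral.integral_congr (g := fun τ => (1 - τ) ^ (r - 1)) fun τ hτ =>
        hker_of_nonpos r (by rw [uIcc_of_le ht] at hτ; exact hτ.2),
      intervalIntegral.integral_comp_sub_left (fun u => u ^ (r - 1)),
      integral_rpow (Or.inl (by linarith)), sub_add_cancel, sub_zero, one_rpow]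
  rw [Hker, ← intervalIntegral.integral_interval_add_Ioi'
    ((continuous_hker r).intervalIntegrable t 0) hint, hleft, ← Hker, Hker_of_nonneg r le_rfl,
    neg_zero, exp_zero]

noncomputable def tailProfile (r s : ℝ) : ℝ := if 0 ≤ s then exp (-s) else (1 - s) ^ r

lemma Hker_le_tailProfile {r : ℝ} (hr : 0 < r) (s : ℝ) :
    Hker r s ≤ max 1 r⁻¹ * tailProfile r s := by
  rw [tailProfile]
  split_ifs with hs
  · rw [Hker_of_nonneg r hs]
    exact le_mul_of_one_le_left (exp_pos _).le (le_max_left _ _)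
  · rw [Hker_of_nonpos hr (not_le.mp hs).le]
    have hX : 1 ≤ (1 - s) ^ r := one_le_rpow (by linarith) hr.le
    have : ((1 - s) ^ r - 1) * r⁻¹ ≤ ((1 - s) ^ r - 1) * max 1 r⁻¹ :=
      mul_le_mul_of_nonneg_left (le_max_right _ _) (by linarith)
    rw [div_eq_mul_inv]
    nlinarith [le_max_left 1 r⁻¹]

lemma tailProfile_le_Hker {r : ℝ} (hr : 0 < r) (s : ℝ) :
    tailProfile r s ≤ max 1 r * Hker r s := by
  rw [tailProfile]
  split_ifs with hs
  · rw [Hker_of_nonneg r hs]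
    exact le_mul_of_one_le_left (exp_pos _).le (le_max_left _ _)
  · rw [Hker_of_nonpos hr (not_le.mp hs).le]
    have hX : 1 ≤ (1 - s) ^ r := one_le_rpow (by linarith) hr.le
    have hK : 1 ≤ max 1 r * r⁻¹ := by
      rw [← div_eq_mul_inv, one_le_div hr]
      exact le_max_right _ _
    have : (1 - s) ^ r - 1 ≤ max 1 r * r⁻¹ * ((1 - s) ^ r - 1) :=
      le_mul_of_one_le_left (by linarith) hK
    rw [div_eq_mul_inv]
    nlinarith [le_max_left 1 r]

lemma one_add_rpow_le_mul_exp (a : ℝ) {u : ℝ} (hu : 0 ≤ u) :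
    (1 + u) ^ a ≤ ⌈a⌉₊ ! * exp 1 * exp u := by
  calc (1 + u) ^ a ≤ (1 + u) ^ (⌈a⌉₊ : ℝ) :=
        rpow_le_rpow_of_exponent_le (by linarith) (le_ceil a)
    _ = (1 + u) ^ ⌈a⌉₊ / ⌈a⌉₊ ! * ⌈a⌉₊ ! := by
        rw [rpow_natCast, div_mul_cancel₀ _ (by positivity)]
    _ ≤ exp (1 + u) * ⌈a⌉₊ ! := by
        gcongr
        exact pow_div_factorial_le_exp (1 + u) (by positivity) _
    _ = ⌈a⌉₊ ! * exp 1 * exp u := by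
        rw [exp_add]
        ring

lemma tailProfile_mul_rpow_le {m k : ℝ} (hm : 0 ≤ m) (hmk : m ≤ k) (s : ℝ) {t : ℝ}
    (ht : 0 ≤ t) :
    tailProfile m (s + t) * (1 + t) ^ (k - m) ≤ ⌈k - m⌉₊ ! * exp 1 * tailProfile k s := by
  set C : ℝ := ⌈k - m⌉₊ ! * exp 1
  have ha : 0 ≤ k - m := by linarith
  unfold tailProfile
  split_ifs with hst hs hs
  · calc exp (-(s + t)) * (1 + t) ^ (k - m) ≤ exp (-(s + t)) * (C * exp t) := by
          gcongr
          exact one_add_rpow_le_mul_exp (k - m) ht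
      _ = C * exp (-s) := by
          rw [mul_left_comm, ← exp_add]
          ring_nf
  · -- the difference of the two sides is `-s * (s + t) ≥ 0`
    have hbase : 1 + t ≤ (1 - s) * (1 + (s + t)) := by nlinarith
    calc exp (-(s + t)) * (1 + t) ^ (k - m)
        ≤ exp (-(s + t)) * ((1 - s) ^ (k - m) * (1 + (s + t)) ^ (k - m)) := by
          rw [← mul_rpow (by linarith) (by linarith)]
          gcongr
      _ ≤ exp (-(s + t)) * ((1 - s) ^ k * (C * exp (s + t))) := by
          have hk : (1 - s) ^ (k - m) ≤ (1 - s) ^ k :=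
            rpow_le_rpow_of_exponent_le (by linarith) (by linarith)
          have hexp := one_add_rpow_le_mul_exp (k - m) hst
          gcongr
          exact rpow_nonneg (by linarith) _
      _ = C * (1 - s) ^ k * (exp (-(s + t)) * exp (s + t)) := by ring
      _ = C * (1 - s) ^ k := by rw [← exp_add, neg_add_cancel, exp_zero, mul_one]
  · linarith
  · have hC : 1 ≤ C := one_le_mul_of_one_le_of_one_le (mod_cast factorial_pos _)
      (one_le_exp zero_le_one)
    calc (1 - (s + t)) ^ m * (1 + t) ^ (k - m) ≤ (1 - s) ^ m * (1 - s) ^ (k - m) := by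
          gcongr
          · exact rpow_nonneg (by linarith) _
          all_goals linarith
      _ = (1 - s) ^ k := by
          rw [← rpow_add (by linarith), add_sub_cancel]
      _ ≤ C * (1 - s) ^ k :=
          le_mul_of_one_le_left (rpow_nonneg (by linarith) _) hC

/-- Interpolation-type decay estimate comparing the tails `H_m` and `H_k`. -/
theorem Hker_tail_comparison (m k : ℝ) (hm : 0 < m) (hmk : m < k) :
    ∃ C : ℝ, 0 < C ∧ ∀ s t : ℝ, 0 ≤ t →
      Hker m (s + t) ≤ C * Hker k s * (1 + t) ^ (m - k) := by
  refine ⟨max 1 m⁻¹ * (⌈k - m⌉₊ ! * exp 1) * max 1 k, by positivity, fun s t ht => ?_⟩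
  rw [show m - k = -(k - m) by ring, rpow_neg (by linarith), ← div_eq_mul_inv,
    le_div_iff₀ (by positivity)]
  calc Hker m (s + t) * (1 + t) ^ (k - m)
      ≤ max 1 m⁻¹ * (tailProfile m (s + t) * (1 + t) ^ (k - m)) := by
        rw [← mul_assoc]
        gcongr
        exact Hker_le_tailProfile hm _
    _ ≤ max 1 m⁻¹ * (⌈k - m⌉₊ ! * exp 1 * tailProfile k s) :=
        mul_le_mul_of_nonneg_left (tailProfile_mul_rpow_le hm.le hmk.le s ht) (by positivity)
    _ ≤ max 1 m⁻¹ * (⌈k - m⌉₊ ! * exp 1 * (max 1 k * Hker k s)) := by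
        gcongr
        exact tailProfile_le_Hker (hm.trans hmk) s
    _ = max 1 m⁻¹ * (⌈k - m⌉₊ ! * exp 1) * max 1 k * Hker k s := by ring
end

section
/- Fix k > 0 and polynomial weights w_i = i^{1+k}. Suppose b_i ≥ (Q_1 + δ)a_i for i ≥ N_z with δ > 0, a_i ≥ C₁ > 0, and a_i, b_i ≤ C₂ i. Then one can choose Ñ ≥ N_z + 1 large enough and δ_k > 0 small enough so that: for all real g with |g| < δ_k and all sequences h with ∑ Q_i i^{2+k}|h_i| < ∞ and ∑ Q_i i h_i = 0, the operator A(g) defined weakly by ∑ Q_i (A(g)h)_i φ_i = ∑_{i≥Ñ} Q_i Q_1 a_i (h_i - h_{i+1} + g h_i)(φ_{i+1} - φ_i - φ_1) - Q_{Ñ-1}Q_1 a_{Ñ-1}h_Ñ(φ_Ñ - φ_{Ñ-1} - φ_1) satisfies ⟨sgn h, A(g)h⟩_{X_{1+k}^*, X_{1+k}} ≤ -C ∑_{i≥Ñ} Q_i a_i (w_{i+1} - w_i)|h_i| ≤ 0 for some C > 0. -/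
/-!
Write `w i = i ^ p` (here `p = 1 + k`), `D i = w (i + 1) - w i` and `c i = Q i Q₁ a i`, which
equals `Q (i + 1) b (i + 1)` by detailed balance. Because `x sgn x = |x|` and `|sgn| ≤ 1`, the
`i`-th flux term is at most `c i (1 + g) (D i + 1) |h i| - c i (D i - 1) |h (i + 1)|` and the
boundary term is at least `c (N - 1) (D (N - 1) - 1) |h N|`. Shifting the index of the incoming
part, the left-hand side is at most
`∑_{i ≥ N} Q i |h i| (Q₁ a i (1 + g) (D i + 1) - b i (D (i - 1) - 1))`.
Convexity of `x ↦ x ^ p` squeezes `D i` between `p i ^ (p - 1)` and `p (i + 1) ^ (p - 1)`, so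
`D i → ∞` and `D (i - 1) / D i → 1`; with `b i ≥ (Q₁ + δ) a i` and `Q₁ g ≤ δ / 8`, every bracket
is at most `-(δ / 2) a i D i` once `i` is large.
-/

open Filter Topology

namespace Real

theorem self_mul_sign (x : ℝ) : x * sign x = |x| := by
  rcases lt_trichotomy x 0 with hx | rfl | hx
  · rw [sign_of_neg hx, abs_of_neg hx, mul_neg_one]
  · simp
  · rw [sign_of_pos hx, abs_of_pos hx, mul_one]

theorem abs_sign_le_one (x : ℝ) : |sign x| ≤ 1 := by
  rcases sign_apply_eq x with h | h | h <;> norm_num [h]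

theorem mul_sign_le_abs (x y : ℝ) : x * sign y ≤ |x| :=
  (le_abs_self _).trans <| by
    rw [abs_mul]; exact mul_le_of_le_one_right (abs_nonneg x) (Real.abs_sign_le_one y)

end Real

theorem mul_sign_sub_le {x y w w' σ : ℝ} (hw' : 0 ≤ w') (hσ : |σ| ≤ 1) :
    x * (w' * Real.sign y - w * Real.sign x - σ) ≤ (w' - w + 1) * |x| := by
  have h₁ : w' * (x * Real.sign y) ≤ w' * |x| :=
    mul_le_mul_of_nonneg_left (Real.mul_sign_le_abs x y) hw'
  have h₂ : -(x * σ) ≤ |x| := by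
    have := abs_mul x σ ▸ neg_abs_le (x * σ)
    nlinarith [abs_nonneg x]
  have h₃ := Real.self_mul_sign x
  linear_combination h₁ + h₂ - w * h₃

theorem le_mul_sign_sub {x y w w' σ : ℝ} (hw : 0 ≤ w) (hσ : |σ| ≤ 1) :
    (w' - w - 1) * |y| ≤ y * (w' * Real.sign y - w * Real.sign x - σ) := by
  have h₁ : w * (y * Real.sign x) ≤ w * |y| :=
    mul_le_mul_of_nonneg_left (Real.mul_sign_le_abs y x) hw
  have h₂ : y * σ ≤ |y| := by
    have := abs_mul y σ ▸ le_abs_self (y * σ)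
    nlinarith [abs_nonneg y]
  have h₃ := Real.self_mul_sign y
  linear_combination h₁ + h₂ - w' * h₃

theorem abs_mul_sign_sub_le {x y w w' σ : ℝ} (hw : 0 ≤ w) (hw' : 0 ≤ w') (hσ : |σ| ≤ 1) :
    |w' * Real.sign y - w * Real.sign x - σ| ≤ w' + w + 1 := by
  have hy := mul_le_of_le_one_right hw' (Real.abs_sign_le_one y)
  have hx := mul_le_of_le_one_right hw (Real.abs_sign_le_one x)
  calc |w' * Real.sign y - w * Real.sign x - σ|
      ≤ |w' * Real.sign y| + |w * Real.sign x| + |σ| :=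
        (abs_sub _ _).trans (add_le_add_left (abs_sub _ _) _)
    _ ≤ w' + w + 1 := by rw [abs_mul, abs_mul, abs_of_nonneg hw, abs_of_nonneg hw']; linarith

theorem abs_one_rpow_mul_sign_le {p : ℝ} (x : ℝ) : |(1 : ℝ) ^ p * Real.sign x| ≤ 1 := by
  rw [Real.one_rpow, one_mul]; exact Real.abs_sign_le_one x

theorem mul_rpow_sub_one_le_rpow_add_one_sub {p x : ℝ} (hp : 1 ≤ p) (hx : 0 ≤ x) :
    p * x ^ (p - 1) ≤ (x + 1) ^ p - x ^ p := by
  have := (convexOn_rpow hp).le_slope_of_hasDerivAt (x := x) (y := x + 1) hx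
    (by simp only [Set.mem_Ici]; linarith) (by linarith)
    (Real.hasDerivAt_rpow_const (Or.inr hp))
  simpa [slope_def_field] using this

theorem rpow_add_one_sub_le {p x : ℝ} (hp : 1 ≤ p) (hx : 0 ≤ x) :
    (x + 1) ^ p - x ^ p ≤ p * (x + 1) ^ (p - 1) := by
  have := (convexOn_rpow hp).slope_le_of_hasDerivAt (x := x) (y := x + 1) hx
    (by simp only [Set.mem_Ici]; linarith) (by linarith)
    (Real.hasDerivAt_rpow_const (Or.inr hp))
  simpa [slope_def_field] using this

noncomputable def powIncr (p : ℝ) (n : ℕ) : ℝ := ((n + 1 : ℕ) : ℝ) ^ p - (n : ℝ) ^ p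

theorem powIncr_nonneg {p : ℝ} (hp : 0 ≤ p) (n : ℕ) : 0 ≤ powIncr p n :=
  sub_nonneg.2 <| Real.rpow_le_rpow (Nat.cast_nonneg n) (by push_cast; linarith) hp

theorem powIncr_le {p : ℝ} (n : ℕ) : powIncr p n ≤ ((n + 1 : ℕ) : ℝ) ^ p :=
  sub_le_self _ (Real.rpow_nonneg (Nat.cast_nonneg n) p)

theorem mul_rpow_sub_one_le_powIncr {p : ℝ} (hp : 1 ≤ p) (n : ℕ) :
    p * (n : ℝ) ^ (p - 1) ≤ powIncr p n := by
  simpa [powIncr] using mul_rpow_sub_one_le_rpow_add_one_sub hp (Nat.cast_nonneg (α := ℝ) n)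

theorem powIncr_le_mul_rpow_sub_one {p : ℝ} (hp : 1 ≤ p) (n : ℕ) :
    powIncr p n ≤ p * ((n + 1 : ℕ) : ℝ) ^ (p - 1) := by
  simpa [powIncr] using rpow_add_one_sub_le hp (Nat.cast_nonneg (α := ℝ) n)

theorem powIncr_pos {p : ℝ} (hp : 0 < p) (n : ℕ) : 0 < powIncr p n :=
  sub_pos.2 <| Real.rpow_lt_rpow (Nat.cast_nonneg n) (by push_cast; linarith) hp

theorem tendsto_powIncr_atTop {p : ℝ} (hp : 1 < p) : Tendsto (powIncr p) atTop atTop :=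
  tendsto_atTop_mono (mul_rpow_sub_one_le_powIncr hp.le) <|
    ((tendsto_rpow_atTop (by linarith)).comp tendsto_natCast_atTop_atTop).const_mul_atTop
      (by linarith)

theorem tendsto_powIncr_div_powIncr_succ {p : ℝ} (hp : 1 < p) :
    Tendsto (fun n => powIncr p n / powIncr p (n + 1)) atTop (𝓝 1) := by
  have hlow : Tendsto (fun n : ℕ => ((n : ℝ) / (n + 2)) ^ (p - 1)) atTop (𝓝 1) := by
    simpa [Function.comp_def] using
      (Real.continuousAt_rpow_const 1 (p - 1) (Or.inl one_ne_zero)).tendsto.comp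
        (tendsto_natCast_div_add_atTop (2 : ℝ))
  refine tendsto_of_tendsto_of_tendsto_of_le_of_le' hlow tendsto_const_nhds ?_ ?_
  · filter_upwards with n
    rw [Real.div_rpow (by positivity) (by positivity),
      ← mul_div_mul_left _ _ (by linarith : (0 : ℝ) < p).ne']
    refine div_le_div₀ (powIncr_nonneg (by linarith) n) (mul_rpow_sub_one_le_powIncr hp.le n)
      (powIncr_pos (by linarith) _) ?_
    simpa [add_assoc, one_add_one_eq_two] using powIncr_le_mul_rpow_sub_one hp.le (n + 1)
  · filter_upwards with n
    rw [div_le_one (powIncr_pos (by linarith) (n + 1))]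
    exact (powIncr_le_mul_rpow_sub_one hp.le n).trans (mul_rpow_sub_one_le_powIncr hp.le (n + 1))

theorem eventually_mul_powIncr_succ_add_one_le {p α β : ℝ} (hp : 1 < p) (hβ : 0 < β)
    (hαβ : α < β) :
    ∀ᶠ n in atTop, α * (powIncr p (n + 1) + 1) ≤ β * (powIncr p n - 1) := by
  obtain ⟨c, hαc, hc1⟩ := exists_between ((div_lt_one hβ).2 hαβ)
  have hgap : 0 < c * β - α := by rw [div_lt_iff₀ hβ] at hαc; linarith
  filter_upwards [(tendsto_powIncr_div_powIncr_succ hp).eventually (lt_mem_nhds hc1),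
    ((tendsto_powIncr_atTop hp).comp (tendsto_add_atTop_nat 1)).eventually_ge_atTop
      ((α + β) / (c * β - α))] with n hratio hlarge
  have hd := powIncr_pos (p := p) (by linarith) (n + 1)
  rw [lt_div_iff₀ hd] at hratio
  rw [Function.comp_apply, div_le_iff₀ hgap] at hlarge
  -- `β D n ≥ c β D (n + 1) = α D (n + 1) + (c β - α) D (n + 1) ≥ α D (n + 1) + α + β`
  nlinarith

theorem tsum_ite_le_eq_tsum_add {α : Type*} [AddCommMonoid α] [TopologicalSpace α]
    (f : ℕ → α) (N : ℕ) : ∑' i, (if N ≤ i then f i else 0) = ∑' n, f (n + N) := by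
  rw [← (add_left_injective N).tsum_eq (f := fun i => if N ≤ i then f i else 0)]
  · simp
  · intro i hi
    have hNi : N ≤ i := by by_contra h; exact hi (if_neg h)
    exact ⟨i - N, Nat.sub_add_cancel hNi⟩

theorem tsum_ite_sub_le_of_telescoping {T U V R : ℕ → ℝ} {N : ℕ} {B : ℝ}
    (hT : Summable T) (hV : Summable V) (hU : ∀ i, N ≤ i → 0 ≤ U i)
    (hR : ∀ i, N ≤ i → 0 ≤ R i) (hstep : ∀ i, N ≤ i → T i ≤ U i - V (i + 1))
    (hgain : ∀ i, N ≤ i → U i - V i ≤ -R i) (hB : V N ≤ B) :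
    ∑' i, (if N ≤ i then T i else 0) - B ≤ -∑' i, (if N ≤ i then R i else 0) := by
  rw [tsum_ite_le_eq_tsum_add, tsum_ite_le_eq_tsum_add]
  have hV' : Summable fun n => V (n + N) := (summable_nat_add_iff N).2 hV
  -- `U` and `R` are nonnegative with `U + R ≤ V`.
  have hU' : Summable fun n => U (n + N) :=
    hV'.of_nonneg_of_le (fun n => hU _ (by omega))
      (fun n => by linarith [hgain (n + N) (by omega), hR (n + N) (by omega)])
  have hR' : Summable fun n => R (n + N) :=
    hV'.of_nonneg_of_le (fun n => hR _ (by omega))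
      (fun n => by linarith [hgain (n + N) (by omega), hU (n + N) (by omega)])
  have hV'' : Summable fun n => V (n + 1 + N) := (summable_nat_add_iff 1).2 hV'
  calc ∑' n, T (n + N) - B
      ≤ ∑' n, (U (n + N) - V (n + 1 + N)) - V (0 + N) := by
        refine sub_le_sub (((summable_nat_add_iff N).2 hT).tsum_le_tsum (fun n => ?_)
          (hU'.sub hV'')) (by rwa [zero_add])
        rw [show n + 1 + N = n + N + 1 by omega]
        exact hstep _ (by omega)
    _ = ∑' n, (U (n + N) - V (n + N)) := by
        rw [hU'.tsum_sub hV'', hU'.tsum_sub hV', hV'.tsum_eq_zero_add]; ring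
    _ ≤ ∑' n, -R (n + N) :=
        (hU'.sub hV').tsum_le_tsum (fun n => hgain _ (by omega)) hR'.neg
    _ = -∑' n, R (n + N) := tsum_neg

theorem natCast_succ_rpow_le {p : ℝ} (hp : 0 ≤ p) {n : ℕ} (hn : 1 ≤ n) :
    ((n + 1 : ℕ) : ℝ) ^ p ≤ 2 ^ p * (n : ℝ) ^ p := by
  rw [← Real.mul_rpow zero_le_two (Nat.cast_nonneg n)]
  have hn' : (1 : ℝ) ≤ n := Nat.one_le_cast.2 hn
  exact Real.rpow_le_rpow (by positivity) (by push_cast; linarith) hp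

theorem mul_natCast_rpow_le {p c C : ℝ} (hp : 0 ≤ p) {n : ℕ} (hc : c ≤ C * n) :
    c * (n : ℝ) ^ p ≤ C * (n : ℝ) ^ (p + 1) := by
  rw [Real.rpow_add_one' (Nat.cast_nonneg n) (by linarith)]
  nlinarith [Real.rpow_nonneg (Nat.cast_nonneg (α := ℝ) n) p]

/-- The `i`-th summand of `∑ Q_i (A(g) h)_i φ_i` for the test sequence `φ_i = i ^ p sgn h_i`. -/
noncomputable def fluxTerm (p g : ℝ) (Q a h : ℕ → ℝ) (i : ℕ) : ℝ :=
  Q i * Q 1 * a i * (h i - h (i + 1) + g * h i) *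
    (((i + 1 : ℕ) : ℝ) ^ p * Real.sign (h (i + 1)) - (i : ℝ) ^ p * Real.sign (h i)
      - (1 : ℝ) ^ p * Real.sign (h 1))

section fluxTerm

variable {p g : ℝ} {Q a h : ℕ → ℝ}

theorem fluxTerm_le (hg : 0 ≤ 1 + g) {i : ℕ} (hc : 0 ≤ Q i * Q 1 * a i) :
    fluxTerm p g Q a h i ≤ Q i * Q 1 * a i * (1 + g) * (powIncr p i + 1) * |h i|
      - Q i * Q 1 * a i * (powIncr p i - 1) * |h (i + 1)| := by
  have hout := mul_sign_sub_le (x := h i) (y := h (i + 1)) (w := (i : ℝ) ^ p)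
    (Real.rpow_nonneg (Nat.cast_nonneg (i + 1)) p) (abs_one_rpow_mul_sign_le (p := p) (h 1))
  have hin := le_mul_sign_sub (x := h i) (y := h (i + 1)) (w' := ((i + 1 : ℕ) : ℝ) ^ p)
    (Real.rpow_nonneg (Nat.cast_nonneg i) p) (abs_one_rpow_mul_sign_le (p := p) (h 1))
  unfold fluxTerm powIncr
  linear_combination mul_le_mul_of_nonneg_left hout (mul_nonneg hc hg)
    + mul_le_mul_of_nonneg_left hin hc

theorem abs_fluxTerm_le (hp : 0 ≤ p) (hg : |g| ≤ 1) {i : ℕ} (hc : 0 ≤ Q i * Q 1 * a i) :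
    |fluxTerm p g Q a h i|
      ≤ 3 * (Q i * Q 1 * a i * ((i + 1 : ℕ) : ℝ) ^ p) * (2 * |h i| + |h (i + 1)|) := by
  have hw : (i : ℝ) ^ p ≤ ((i + 1 : ℕ) : ℝ) ^ p :=
    Real.rpow_le_rpow (Nat.cast_nonneg i) (by push_cast; linarith) hp
  have hw₁ : 1 ≤ ((i + 1 : ℕ) : ℝ) ^ p := Real.one_le_rpow (by norm_cast; omega) hp
  have hE := abs_mul_sign_sub_le (x := h i) (y := h (i + 1))
    (Real.rpow_nonneg (Nat.cast_nonneg i) p) (Real.rpow_nonneg (Nat.cast_nonneg (i + 1)) p)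
    (abs_one_rpow_mul_sign_le (p := p) (h 1))
  have hH : |h i - h (i + 1) + g * h i| ≤ 2 * |h i| + |h (i + 1)| := by
    calc |h i - h (i + 1) + g * h i| ≤ |h i| + |h (i + 1)| + |g| * |h i| := by
          rw [← abs_mul]; exact (abs_add_le _ _).trans (add_le_add_left (abs_sub _ _) _)
      _ ≤ 2 * |h i| + |h (i + 1)| := by nlinarith [abs_nonneg (h i)]
  unfold fluxTerm
  rw [abs_mul, abs_mul, abs_of_nonneg hc]
  calc Q i * Q 1 * a i * |h i - h (i + 1) + g * h i|
        * |((i + 1 : ℕ) : ℝ) ^ p * Real.sign (h (i + 1)) - (i : ℝ) ^ p * Real.sign (h i)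
          - (1 : ℝ) ^ p * Real.sign (h 1)|
      ≤ Q i * Q 1 * a i * (2 * |h i| + |h (i + 1)|) * (3 * ((i + 1 : ℕ) : ℝ) ^ p) := by
        gcongr; linarith
    _ = _ := by ring

theorem summable_fluxTerm {C : ℝ} {b : ℕ → ℝ} (hp : 0 ≤ p) (hg : |g| ≤ 1)
    (hnn : ∀ i, 1 ≤ i → 0 ≤ a i ∧ 0 ≤ Q i)
    (hdb : ∀ i, 1 ≤ i → Q i * Q 1 * a i = Q (i + 1) * b (i + 1))
    (hub : ∀ i, 1 ≤ i → a i ≤ C * i ∧ b i ≤ C * i)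
    (hsum : Summable fun i => Q i * (i : ℝ) ^ (p + 1) * |h i|) :
    Summable (fluxTerm p g Q a h) := by
  have hQ₁ := (hnn 1 le_rfl).2
  refine .of_norm_bounded_eventually_nat ((hsum.mul_left (6 * Q 1 * 2 ^ p * C)).add
    (((summable_nat_add_iff 1).2 hsum).mul_left (3 * C))) ?_
  filter_upwards [eventually_ge_atTop 1] with i hi
  obtain ⟨ha, hQ⟩ := hnn i hi
  have hQ' := (hnn (i + 1) (by omega)).2
  have hc : 0 ≤ Q i * Q 1 * a i := by positivity
  have hout : a i * ((i + 1 : ℕ) : ℝ) ^ p ≤ 2 ^ p * (C * (i : ℝ) ^ (p + 1)) :=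
    calc a i * ((i + 1 : ℕ) : ℝ) ^ p ≤ a i * (2 ^ p * (i : ℝ) ^ p) :=
          mul_le_mul_of_nonneg_left (natCast_succ_rpow_le hp hi) ha
      _ = 2 ^ p * (a i * (i : ℝ) ^ p) := by ring
      _ ≤ 2 ^ p * (C * (i : ℝ) ^ (p + 1)) :=
          mul_le_mul_of_nonneg_left (mul_natCast_rpow_le hp (hub i hi).1) (by positivity)
  have hin : Q i * Q 1 * a i * ((i + 1 : ℕ) : ℝ) ^ p
      ≤ Q (i + 1) * (C * ((i + 1 : ℕ) : ℝ) ^ (p + 1)) := by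
    rw [hdb i hi, mul_assoc]
    exact mul_le_mul_of_nonneg_left (mul_natCast_rpow_le hp (hub (i + 1) (by omega)).2) hQ'
  rw [Real.norm_eq_abs]
  refine (abs_fluxTerm_le hp hg hc).trans ?_
  calc 3 * (Q i * Q 1 * a i * ((i + 1 : ℕ) : ℝ) ^ p) * (2 * |h i| + |h (i + 1)|)
      = 6 * Q 1 * Q i * (a i * ((i + 1 : ℕ) : ℝ) ^ p) * |h i|
        + 3 * (Q i * Q 1 * a i * ((i + 1 : ℕ) : ℝ) ^ p) * |h (i + 1)| := by ring
    _ ≤ 6 * Q 1 * Q i * (2 ^ p * (C * (i : ℝ) ^ (p + 1))) * |h i|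
        + 3 * (Q (i + 1) * (C * ((i + 1 : ℕ) : ℝ) ^ (p + 1))) * |h (i + 1)| := by gcongr
    _ = _ := by ring

end fluxTerm

theorem summable_mul_powIncr_pred_sub_one {p C : ℝ} {Q b h : ℕ → ℝ} (hp : 0 ≤ p)
    (hnn : ∀ i, 1 ≤ i → 0 ≤ b i ∧ 0 ≤ Q i) (hub : ∀ i, 1 ≤ i → b i ≤ C * i)
    (hsum : Summable fun i => Q i * (i : ℝ) ^ (p + 1) * |h i|) :
    Summable fun i => Q i * b i * (powIncr p (i - 1) - 1) * |h i| := by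
  refine .of_norm_bounded_eventually_nat (hsum.mul_left C) ?_
  filter_upwards [eventually_ge_atTop 1] with i hi
  obtain ⟨hb, hQ⟩ := hnn i hi
  have hD : |powIncr p (i - 1) - 1| ≤ (i : ℝ) ^ p := by
    have hle := powIncr_le (p := p) (i - 1)
    rw [Nat.sub_add_cancel hi] at hle
    have h₁ : 1 ≤ (i : ℝ) ^ p := Real.one_le_rpow (by exact_mod_cast hi) hp
    rw [abs_sub_le_iff]
    constructor <;> linarith [powIncr_nonneg hp (i - 1)]
  rw [Real.norm_eq_abs, abs_mul, abs_mul, abs_abs, abs_of_nonneg (mul_nonneg hQ hb)]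
  calc Q i * b i * |powIncr p (i - 1) - 1| * |h i| ≤ Q i * (b i * (i : ℝ) ^ p) * |h i| := by
        rw [mul_assoc (Q i)]; gcongr
    _ ≤ Q i * (C * (i : ℝ) ^ (p + 1)) * |h i| := by
        gcongr ?_ * _; exact mul_le_mul_of_nonneg_left (mul_natCast_rpow_le hp (hub i hi)) hQ
    _ = C * (Q i * (i : ℝ) ^ (p + 1) * |h i|) := by ring

theorem truncated_transport_le {p g δ C : ℝ} {Q a b h : ℕ → ℝ} {N : ℕ} (hp : 0 ≤ p)
    (hδ : 0 < δ) (hN : 2 ≤ N) (hg : |g| ≤ 1)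
    (hnn : ∀ i, 1 ≤ i → 0 ≤ a i ∧ 0 ≤ b i ∧ 0 ≤ Q i)
    (hdb : ∀ i, 1 ≤ i → Q i * Q 1 * a i = Q (i + 1) * b (i + 1))
    (hfrag : ∀ i, N ≤ i → (Q 1 + δ) * a i ≤ b i)
    (hub : ∀ i, 1 ≤ i → a i ≤ C * i ∧ b i ≤ C * i)
    (hmargin : ∀ i, N ≤ i → Q 1 * (1 + g) * (powIncr p i + 1) + δ / 2 * powIncr p i
      ≤ (Q 1 + δ) * (powIncr p (i - 1) - 1))
    (hsum : Summable fun i => Q i * (i : ℝ) ^ (p + 1) * |h i|) :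
    (∑' i, if N ≤ i then fluxTerm p g Q a h i else 0)
      - Q (N - 1) * Q 1 * a (N - 1) * h N * ((N : ℝ) ^ p * Real.sign (h N)
        - ((N - 1 : ℕ) : ℝ) ^ p * Real.sign (h (N - 1)) - (1 : ℝ) ^ p * Real.sign (h 1))
      ≤ -(δ / 2) * ∑' i, if N ≤ i then Q i * a i * powIncr p i * |h i| else 0 := by
  obtain ⟨M, rfl⟩ : ∃ M, N = M + 1 := ⟨N - 1, by omega⟩
  have hQ₁ := (hnn 1 le_rfl).2.2
  have hg₀ : 0 ≤ 1 + g := by linarith [neg_abs_le g]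
  have hgap : ∀ i, M + 1 ≤ i → 0 ≤ powIncr p (i - 1) - 1 := fun i hi => by
    have hD := powIncr_nonneg hp i
    refine nonneg_of_mul_nonneg_right ((by positivity : 0 ≤ Q 1 * (1 + g) * (powIncr p i + 1)
      + δ / 2 * powIncr p i).trans (hmargin i hi)) (by linarith)
  rw [neg_mul, ← tsum_mul_left]
  simp only [mul_ite, mul_zero, Nat.add_sub_cancel]
  -- `U i` bounds the outgoing (`h i`) part of the `i`-th flux term, `V (i + 1)` the incoming one.
  refine tsum_ite_sub_le_of_telescoping
    (summable_fluxTerm hp hg (fun i hi => ⟨(hnn i hi).1, (hnn i hi).2.2⟩) hdb hub hsum)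
    (summable_mul_powIncr_pred_sub_one hp (fun i hi => (hnn i hi).2) (fun i hi => (hub i hi).2)
      hsum)
    (U := fun i => Q i * Q 1 * a i * (1 + g) * (powIncr p i + 1) * |h i|)
    (V := fun i => Q i * b i * (powIncr p (i - 1) - 1) * |h i|) ?hU ?hR ?_ ?_ ?_
  case hU | hR =>
    intro i hi
    obtain ⟨ha, -, hQ⟩ := hnn i (by omega)
    have := powIncr_nonneg hp i
    positivity
  · intro i hi
    obtain ⟨ha, -, hQ⟩ := hnn i (by omega)
    simp only [Nat.add_sub_cancel, ← hdb i (by omega)]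
    exact fluxTerm_le hg₀ (by positivity)
  · intro i hi
    obtain ⟨ha, -, hQ⟩ := hnn i (by omega)
    have hm := mul_le_mul_of_nonneg_left (hmargin i hi) ha
    have hf := mul_le_mul_of_nonneg_right (hfrag i hi) (hgap i hi)
    have hbracket : a i * (Q 1 * (1 + g) * (powIncr p i + 1)) - b i * (powIncr p (i - 1) - 1)
        ≤ -(δ / 2 * (a i * powIncr p i)) := by linarith
    nlinarith [mul_le_mul_of_nonneg_left hbracket (mul_nonneg hQ (abs_nonneg (h i)))]
  · obtain ⟨ha, -, hQ⟩ := hnn M (by omega)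
    have hbd := le_mul_sign_sub (x := h M) (y := h (M + 1)) (w' := ((M + 1 : ℕ) : ℝ) ^ p)
      (Real.rpow_nonneg (Nat.cast_nonneg M) p) (abs_one_rpow_mul_sign_le (p := p) (h 1))
    simp only [Nat.add_sub_cancel, ← hdb M (by omega)]
    have := mul_le_mul_of_nonneg_left hbd (by positivity : 0 ≤ Q M * Q 1 * a M)
    unfold powIncr
    linarith

theorem perturbed_transport_dissipative_Xk_general (a b Q : ℕ → ℝ) (k δ C₂ : ℝ) (Nz : ℕ)
    (hk : 0 < k) (hδ : 0 < δ)
    (hpos : ∀ i, 1 ≤ i → 0 < a i ∧ 0 < b i ∧ 0 < Q i)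
    (hdb : ∀ i, 1 ≤ i → Q i * Q 1 * a i = Q (i + 1) * b (i + 1))
    (hfrag : ∀ i, Nz ≤ i → (Q 1 + δ) * a i ≤ b i)
    (hub : ∀ i, 1 ≤ i → a i ≤ C₂ * i ∧ b i ≤ C₂ * i) :
    ∃ Ntil : ℕ, Nz + 1 ≤ Ntil ∧ ∃ δk Cd : ℝ, 0 < δk ∧ 0 < Cd ∧
      ∀ g : ℝ, |g| < δk → ∀ h : ℕ → ℝ,
        Summable (fun i => Q i * (i : ℝ) ^ (2 + k) * |h i|) →
        (∑' i : ℕ, Q i * (i : ℝ) * h i) = 0 →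
        ((∑' i : ℕ, if Ntil ≤ i then
            Q i * Q 1 * a i * (h i - h (i + 1) + g * h i) *
              (((i + 1 : ℕ) : ℝ) ^ (1 + k) * Real.sign (h (i + 1))
                - (i : ℝ) ^ (1 + k) * Real.sign (h i)
                - (1 : ℝ) ^ (1 + k) * Real.sign (h 1))
          else 0)
          - Q (Ntil - 1) * Q 1 * a (Ntil - 1) * h Ntil *
              ((Ntil : ℝ) ^ (1 + k) * Real.sign (h Ntil)
                - ((Ntil - 1 : ℕ) : ℝ) ^ (1 + k) * Real.sign (h (Ntil - 1))
                - (1 : ℝ) ^ (1 + k) * Real.sign (h 1)))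
          ≤ -Cd * (∑' i : ℕ, if Ntil ≤ i then
              Q i * a i * (((i + 1 : ℕ) : ℝ) ^ (1 + k) - (i : ℝ) ^ (1 + k)) * |h i|
            else 0) ∧
        (0 : ℝ) ≤ Cd * (∑' i : ℕ, if Ntil ≤ i then
              Q i * a i * (((i + 1 : ℕ) : ℝ) ^ (1 + k) - (i : ℝ) ^ (1 + k)) * |h i|
            else 0) := by
  have hQ₁ := (hpos 1 le_rfl).2.2
  have hnn i (hi : 1 ≤ i) : 0 ≤ a i ∧ 0 ≤ b i ∧ 0 ≤ Q i :=
    ⟨(hpos i hi).1.le, (hpos i hi).2.1.le, (hpos i hi).2.2.le⟩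
  -- `Q₁ (1 + g) ≤ Q₁ + δ / 8`, and the further `δ / 2` is the dissipation rate `Cd`.
  obtain ⟨N₀, hN₀⟩ := eventually_atTop.1 <| eventually_mul_powIncr_succ_add_one_le
    (p := 1 + k) (α := Q 1 + 5 * δ / 8) (β := Q 1 + δ) (by linarith) (by linarith) (by linarith)
  refine ⟨N₀ + Nz + 2, by omega, min 1 (δ / (8 * Q 1)), δ / 2, by positivity, by positivity,
    fun g hg h hsum _ => ⟨?_, ?_⟩⟩
  · have hgQ : Q 1 * g ≤ δ / 8 := by
      have := (le_abs_self g).trans_lt (hg.trans_le (min_le_right _ _))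
      rw [lt_div_iff₀ (by positivity)] at this
      linarith
    refine truncated_transport_le (by linarith) hδ (by omega)
      (hg.le.trans (min_le_left _ _)) hnn hdb (fun i hi => hfrag i (by omega)) hub
      (fun i hi => ?_) (by rwa [show (1 : ℝ) + k + 1 = 2 + k by ring])
    have hmargin := hN₀ (i - 1) (by omega)
    rw [Nat.sub_add_cancel (by omega)] at hmargin
    nlinarith [powIncr_nonneg (p := 1 + k) (by linarith) i]
  · refine mul_nonneg (by positivity) (tsum_nonneg fun i => ?_)
    split_ifs with hi
    · obtain ⟨ha, -, hQ⟩ := hnn i (by omega)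
      exact mul_nonneg (mul_nonneg (mul_nonneg hQ ha) (powIncr_nonneg (by linarith) i))
        (abs_nonneg _)
    · exact le_rfl

/-- Uniform dissipativity, with explicit negative contribution, of the `g`-perturbed
truncated transport part `A(g)` of the Becker–Döring operator in the polynomially weighted
space `X_{1+k} = ℓ¹(Q_i i^{1+k})`, with weights `w_i = i^{1+k}` and test sequence
`φ_i = w_i sgn(h_i)`. -/
theorem perturbed_transport_dissipative_Xk (a b Q : ℕ → ℝ) (k δ C₁ C₂ : ℝ) (Nz : ℕ)
    (hk : 0 < k) (hδ : 0 < δ) (hC₁ : 0 < C₁)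
    (hpos : ∀ i, 1 ≤ i → 0 < a i ∧ 0 < b i ∧ 0 < Q i)
    (hdb : ∀ i, 1 ≤ i → Q i * Q 1 * a i = Q (i + 1) * b (i + 1))
    (hfrag : ∀ i, Nz ≤ i → (Q 1 + δ) * a i ≤ b i)
    (hla : ∀ i, 1 ≤ i → C₁ ≤ a i)
    (hub : ∀ i, 1 ≤ i → a i ≤ C₂ * i ∧ b i ≤ C₂ * i)
    (hNz : 1 ≤ Nz) :
    ∃ Ntil : ℕ, Nz + 1 ≤ Ntil ∧ ∃ δk Cd : ℝ, 0 < δk ∧ 0 < Cd ∧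
      ∀ g : ℝ, |g| < δk → ∀ h : ℕ → ℝ,
        Summable (fun i => Q i * (i : ℝ) ^ (2 + k) * |h i|) →
        (∑' i : ℕ, Q i * (i : ℝ) * h i) = 0 →
        ((∑' i : ℕ, if Ntil ≤ i then
            Q i * Q 1 * a i * (h i - h (i + 1) + g * h i) *
              (((i + 1 : ℕ) : ℝ) ^ (1 + k) * Real.sign (h (i + 1))
                - (i : ℝ) ^ (1 + k) * Real.sign (h i)
                - (1 : ℝ) ^ (1 + k) * Real.sign (h 1))
          else 0)
          - Q (Ntil - 1) * Q 1 * a (Ntil - 1) * h Ntil *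
              ((Ntil : ℝ) ^ (1 + k) * Real.sign (h Ntil)
                - ((Ntil - 1 : ℕ) : ℝ) ^ (1 + k) * Real.sign (h (Ntil - 1))
                - (1 : ℝ) ^ (1 + k) * Real.sign (h 1)))
          ≤ -Cd * (∑' i : ℕ, if Ntil ≤ i then
              Q i * a i * (((i + 1 : ℕ) : ℝ) ^ (1 + k) - (i : ℝ) ^ (1 + k)) * |h i|
            else 0) ∧
        (0 : ℝ) ≤ Cd * (∑' i : ℕ, if Ntil ≤ i then
              Q i * a i * (((i + 1 : ℕ) : ℝ) ^ (1 + k) - (i : ℝ) ^ (1 + k)) * |h i|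
            else 0) :=
  perturbed_transport_dissipative_Xk_general a b Q k δ C₂ Nz hk hδ hpos hdb hfrag hub
end
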